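/- Let A, V ∈ ℝ^{m×n} with m ≤ n, full row rank, A Vᵀ nonsingular, and let Z ∈ ℝ^{n×m} have orthonormal columns spanning range(Vᵀ). Let x̂ ∈ range(Vᵀ) solve A x̂ = b and let x_0 ∈ range(Vᵀ). If λ := λ_min(Zᵀ(VᵀDA + AᵀDV − AᵀSDA)Z) > 0, then the iterates of the randomized Kaczmarz method with mismatched adjoint satisfy E[‖x_{k+1} − x̂‖²] ≤ (1 − λ)·E[‖x_k − x̂‖²]. -/

import Mathlib

open Matrix Finset

noncomputable def enorm' {n : ℕ} (v : Fin n → ℝ) : ℝ := Real.sqrt (v ⬝ᵥ v)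

/-- Iterates of the randomized Kaczmarz method with mismatched adjoint along a given
sequence of chosen row indices `ω`. -/
noncomputable def rkmaIter {m n : ℕ} (A V : Matrix (Fin m) (Fin n) ℝ) (b : Fin m → ℝ)
    (x0 : Fin n → ℝ) : (k : ℕ) → (Fin k → Fin m) → (Fin n → ℝ)
  | 0, _ => x0
  | k + 1, ω =>
      let x := rkmaIter A V b x0 k (fun j => ω j.castSucc)
      let i := ω (Fin.last k)
      x - ((A i ⬝ᵥ x - b i) / (A i ⬝ᵥ V i)) • V i

/-! The error `e = x - x̂` evolves by the oblique projection `e ↦ e - (⟨aᵢ, e⟩ / ⟨aᵢ, vᵢ⟩) vᵢ`.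
Averaged over `i` with weights `pᵢ`, this lowers `‖e‖²` by exactly `eᵀ M e`, where
`M = VᵀDA + AᵀDV - AᵀSDA`. The error stays in `range Vᵀ = range Z`, so `e = Z c` with
`‖c‖ = ‖e‖`, and `eᵀ M e = cᵀ (ZᵀMZ) c ≥ λ ‖c‖²`. Conditioning on the first `k` indices turns
this one-step bound into the bound in expectation. -/

section Matrix

variable {ι κ : Type*} [Fintype ι] [Fintype κ]

lemma dotProduct_transpose_mul_mul_mulVec (Z : Matrix κ ι ℝ) (M : Matrix κ κ ℝ) (c : ι → ℝ) :
    c ⬝ᵥ (Zᵀ * M * Z) *ᵥ c = Z *ᵥ c ⬝ᵥ M *ᵥ (Z *ᵥ c) := by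
  rw [← mulVec_mulVec, ← mulVec_mulVec, dotProduct_mulVec, vecMul_transpose]

lemma dotProduct_transpose_mul_diagonal_mul_mulVec [DecidableEq ι] (W A : Matrix ι κ ℝ)
    (d : ι → ℝ) (e : κ → ℝ) :
    e ⬝ᵥ (Wᵀ * diagonal d * A) *ᵥ e = ∑ i, d i * (W i ⬝ᵥ e) * (A i ⬝ᵥ e) := by
  rw [← mulVec_mulVec, ← mulVec_mulVec, dotProduct_mulVec, vecMul_transpose, dotProduct]
  refine Finset.sum_congr rfl fun i _ => ?_
  rw [mulVec_diagonal]
  simp only [mulVec]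
  ring

lemma Matrix.IsHermitian.mul_dotProduct_le_dotProduct_mulVec [DecidableEq ι]
    {M : Matrix ι ι ℝ} (hM : M.IsHermitian) {lam : ℝ} (hlam : ∀ j, lam ≤ hM.eigenvalues j)
    (c : ι → ℝ) : lam * (c ⬝ᵥ c) ≤ c ⬝ᵥ M *ᵥ c := by
  have hpsd : (M - algebraMap ℝ _ lam).PosSemidef := by
    refine posSemidef_iff_isHermitian_and_spectrum_nonneg.2
      ⟨hM.sub (IsSelfAdjoint.algebraMap _ (.all lam)), ?_⟩
    rw [← spectrum.sub_singleton_eq, hM.spectrum_real_eq_range_eigenvalues]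
    rintro _ ⟨_, ⟨j, rfl⟩, _, rfl, rfl⟩
    exact sub_nonneg.2 (hlam j)
  have h := hpsd.dotProduct_mulVec_nonneg c
  rw [star_trivial, Algebra.algebraMap_eq_smul_one, sub_mulVec, dotProduct_sub, smul_mulVec,
    one_mulVec, dotProduct_smul, smul_eq_mul] at h
  linarith

end Matrix

noncomputable def obliqueProj {κ : Type*} [Fintype κ] (a v e : κ → ℝ) : κ → ℝ :=
  e - (a ⬝ᵥ e / (a ⬝ᵥ v)) • v

section Kaczmarz

variable {ι κ : Type*} [Fintype ι] [Fintype κ] [DecidableEq ι]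

lemma mul_obliqueProj_dotProduct_self (p : ℝ) {a v : κ → ℝ} (hav : a ⬝ᵥ v ≠ 0) (e : κ → ℝ) :
    p * (obliqueProj a v e ⬝ᵥ obliqueProj a v e)
      = p * (e ⬝ᵥ e) - (2 * (p / (a ⬝ᵥ v)) * (v ⬝ᵥ e) * (a ⬝ᵥ e)
          - (v ⬝ᵥ v) / (a ⬝ᵥ v) * (p / (a ⬝ᵥ v)) * (a ⬝ᵥ e) ^ 2) := by
  rw [obliqueProj, dotProduct_sub, sub_dotProduct, sub_dotProduct, dotProduct_smul,
    smul_dotProduct, smul_dotProduct, dotProduct_smul, dotProduct_comm v e]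
  simp only [smul_eq_mul]
  field_simp
  ring

lemma sum_mul_obliqueProj_dotProduct_self (A V : Matrix ι κ ℝ) {p : ι → ℝ}
    (hps : ∑ i, p i = 1) (hav : ∀ i, A i ⬝ᵥ V i ≠ 0) (e : κ → ℝ) :
    ∑ i, p i * (obliqueProj (A i) (V i) e ⬝ᵥ obliqueProj (A i) (V i) e)
      = e ⬝ᵥ e - e ⬝ᵥ (Vᵀ * diagonal (fun i => p i / (A i ⬝ᵥ V i)) * A
          + Aᵀ * diagonal (fun i => p i / (A i ⬝ᵥ V i)) * V
          - Aᵀ * diagonal (fun i => (V i ⬝ᵥ V i) / (A i ⬝ᵥ V i))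
              * diagonal (fun i => p i / (A i ⬝ᵥ V i)) * A) *ᵥ e := by
  rw [Matrix.mul_assoc Aᵀ (diagonal _) (diagonal _), diagonal_mul_diagonal, sub_mulVec,
    add_mulVec, dotProduct_sub, dotProduct_add, dotProduct_transpose_mul_diagonal_mul_mulVec,
    dotProduct_transpose_mul_diagonal_mul_mulVec, dotProduct_transpose_mul_diagonal_mul_mulVec,
    ← Finset.sum_add_distrib, ← Finset.sum_sub_distrib]
  simp only [mul_obliqueProj_dotProduct_self _ (hav _)]
  rw [Finset.sum_sub_distrib, ← Finset.sum_mul, hps, one_mul]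
  congr 1
  refine Finset.sum_congr rfl fun i _ => ?_
  ring

end Kaczmarz

lemma sum_prod_mul_eq_sum_prod_mul_sum_snoc {α R : Type*} [Fintype α] [CommSemiring R]
    (k : ℕ) (p : α → R) (f : (Fin (k + 1) → α) → R) :
    ∑ ω : Fin (k + 1) → α, (∏ j, p (ω j)) * f ω
      = ∑ ω : Fin k → α, (∏ j, p (ω j)) * ∑ i, p i * f (Fin.snoc ω i) := by
  rw [← (Fin.snocEquiv fun _ => α).sum_comp, Fintype.sum_prod_type, Finset.sum_comm]
  refine Finset.sum_congr rfl fun ω _ => ?_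
  rw [Finset.mul_sum]
  refine Finset.sum_congr rfl fun i _ => ?_
  rw [show (Fin.snocEquiv fun _ => α) (i, ω) = Fin.snoc ω i from rfl, Fin.prod_univ_castSucc]
  simp only [Fin.snoc_castSucc, Fin.snoc_last]
  ring

lemma dotProduct_self_eq_enorm'_sq {n : ℕ} (v : Fin n → ℝ) : v ⬝ᵥ v = enorm' v ^ 2 :=
  (Real.sq_sqrt (Finset.sum_nonneg fun _ _ => mul_self_nonneg _)).symm

section Iterates

variable {m n : ℕ} (A V : Matrix (Fin m) (Fin n) ℝ) (b : Fin m → ℝ) (x0 : Fin n → ℝ)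

lemma rkmaIter_snoc_sub {xhat : Fin n → ℝ} (hb : A *ᵥ xhat = b) (k : ℕ) (ω : Fin k → Fin m)
    (i : Fin m) :
    rkmaIter A V b x0 (k + 1) (Fin.snoc ω i) - xhat
      = obliqueProj (A i) (V i) (rkmaIter A V b x0 k ω - xhat) := by
  simp only [rkmaIter, Fin.snoc_castSucc, Fin.snoc_last, obliqueProj, ← hb]
  rw [dotProduct_sub, sub_right_comm]
  rfl

lemma rkmaIter_sub_mem_range {xhat : Fin n → ℝ}
    (h0 : x0 - xhat ∈ LinearMap.range Vᵀ.mulVecLin) (k : ℕ) (ω : Fin k → Fin m) :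
    rkmaIter A V b x0 k ω - xhat ∈ LinearMap.range Vᵀ.mulVecLin := by
  induction k with
  | zero => exact h0
  | succ k ih =>
    have hVi : V (ω (Fin.last k)) ∈ LinearMap.range Vᵀ.mulVecLin :=
      ⟨Pi.single (ω (Fin.last k)) 1, by rw [mulVecLin_apply, mulVec_single_one]; rfl⟩
    rw [rkmaIter, sub_right_comm]
    exact Submodule.sub_mem _ (ih _) (Submodule.smul_mem _ _ hVi)

end Iterates

theorem rkma_underdetermined_contraction_general {m n : ℕ}
    (A V : Matrix (Fin m) (Fin n) ℝ)
    (p : Fin m → ℝ) (hp : ∀ i, 0 < p i) (hps : ∑ i, p i = 1)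
    (hav : ∀ i, 0 < A i ⬝ᵥ V i)
    (D S : Matrix (Fin m) (Fin m) ℝ)
    (hD : D = Matrix.diagonal (fun i => p i / (A i ⬝ᵥ V i)))
    (hS : S = Matrix.diagonal (fun i => (enorm' (V i)) ^ 2 / (A i ⬝ᵥ V i)))
    (Z : Matrix (Fin n) (Fin m) ℝ) (hZortho : Zᵀ * Z = 1)
    (hZrange : ∀ y : Fin n → ℝ,
      (∃ c : Fin m → ℝ, y = Vᵀ.mulVec c) ↔ (∃ c : Fin m → ℝ, y = Z.mulVec c))
    (b : Fin m → ℝ) (xhat : Fin n → ℝ) (hb : A.mulVec xhat = b)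
    (hxhatrange : ∃ c : Fin m → ℝ, xhat = Vᵀ.mulVec c)
    (x0 : Fin n → ℝ) (hx0 : ∃ c : Fin m → ℝ, x0 = Vᵀ.mulVec c)
    (hM : (Zᵀ * (Vᵀ * D * A + Aᵀ * D * V - Aᵀ * S * D * A) * Z).IsHermitian)
    (lam : ℝ) (hlam : lam = ⨅ j, hM.eigenvalues j) :
    ∀ k : ℕ,
      ∑ ω : Fin (k + 1) → Fin m, (∏ j, p (ω j)) *
          (enorm' (rkmaIter A V b x0 (k + 1) ω - xhat)) ^ 2
        ≤ (1 - lam) *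
          ∑ ω : Fin k → Fin m, (∏ j, p (ω j)) *
            (enorm' (rkmaIter A V b x0 k ω - xhat)) ^ 2 := by
  intro k
  have hstart : x0 - xhat ∈ LinearMap.range Vᵀ.mulVecLin := by
    obtain ⟨c0, rfl⟩ := hx0
    obtain ⟨c, rfl⟩ := hxhatrange
    exact ⟨c0 - c, by rw [mulVecLin_apply, mulVec_sub]⟩
  have hcontract : ∀ e ∈ LinearMap.range Vᵀ.mulVecLin,
      lam * (e ⬝ᵥ e) ≤ e ⬝ᵥ (Vᵀ * D * A + Aᵀ * D * V - Aᵀ * S * D * A) *ᵥ e := by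
    rintro e ⟨c, rfl⟩
    obtain ⟨c', hc'⟩ := (hZrange _).1 ⟨c, rfl⟩
    have hnorm : Z *ᵥ c' ⬝ᵥ Z *ᵥ c' = c' ⬝ᵥ c' := by
      simpa [hZortho] using (dotProduct_transpose_mul_mul_mulVec Z 1 c').symm
    rw [mulVecLin_apply, hc', hnorm, ← dotProduct_transpose_mul_mul_mulVec, hlam]
    exact hM.mul_dotProduct_le_dotProduct_mulVec (ciInf_le (Set.finite_range _).bddBelow) c'
  rw [sum_prod_mul_eq_sum_prod_mul_sum_snoc, Finset.mul_sum]
  refine Finset.sum_le_sum fun ω _ => ?_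
  rw [mul_left_comm]
  refine mul_le_mul_of_nonneg_left ?_ (Finset.prod_nonneg fun j _ => (hp _).le)
  have he := hcontract _ (rkmaIter_sub_mem_range A V b x0 hstart k ω)
  rw [hD, hS] at he
  simp only [rkmaIter_snoc_sub A V b x0 hb, ← dotProduct_self_eq_enorm'_sq] at he ⊢
  rw [sum_mul_obliqueProj_dotProduct_self A V hps fun i => (hav i).ne']
  linarith

theorem rkma_underdetermined_contraction {m n : ℕ} (hmn : m ≤ n)
    (A V : Matrix (Fin m) (Fin n) ℝ)
    (hA : A.rank = m) (hV : V.rank = m) (hAVt : IsUnit (A * Vᵀ))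
    (p : Fin m → ℝ) (hp : ∀ i, 0 < p i) (hps : ∑ i, p i = 1)
    (hav : ∀ i, 0 < A i ⬝ᵥ V i)
    (D S : Matrix (Fin m) (Fin m) ℝ)
    (hD : D = Matrix.diagonal (fun i => p i / (A i ⬝ᵥ V i)))
    (hS : S = Matrix.diagonal (fun i => (enorm' (V i)) ^ 2 / (A i ⬝ᵥ V i)))
    (Z : Matrix (Fin n) (Fin m) ℝ) (hZortho : Zᵀ * Z = 1)
    (hZrange : ∀ y : Fin n → ℝ,
      (∃ c : Fin m → ℝ, y = Vᵀ.mulVec c) ↔ (∃ c : Fin m → ℝ, y = Z.mulVec c))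
    (b : Fin m → ℝ) (xhat : Fin n → ℝ) (hb : A.mulVec xhat = b)
    (hxhatrange : ∃ c : Fin m → ℝ, xhat = Vᵀ.mulVec c)
    (x0 : Fin n → ℝ) (hx0 : ∃ c : Fin m → ℝ, x0 = Vᵀ.mulVec c)
    (hM : (Zᵀ * (Vᵀ * D * A + Aᵀ * D * V - Aᵀ * S * D * A) * Z).IsHermitian)
    (lam : ℝ) (hlam : lam = ⨅ j, hM.eigenvalues j) (hlampos : 0 < lam) :
    ∀ k : ℕ,
      ∑ ω : Fin (k + 1) → Fin m, (∏ j, p (ω j)) *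
          (enorm' (rkmaIter A V b x0 (k + 1) ω - xhat)) ^ 2
        ≤ (1 - lam) *
          ∑ ω : Fin k → Fin m, (∏ j, p (ω j)) *
            (enorm' (rkmaIter A V b x0 k ω - xhat)) ^ 2 :=
  rkma_underdetermined_contraction_general A V p hp hps hav D S hD hS Z hZortho hZrange b xhat hb
    hxhatrange x0 hx0 hM lam hlam
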